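/- For every m ≥ 5 one has (P_m − 2)/(P_m + P_{m−1}) < √2/2; moreover the sequence e_m = 2 + (P_m − 2)/(P_m + P_{m−1}) is strictly increasing for m ≥ 5 and converges to 2 + √2/2 as m → ∞. -/
import Mathlib


/-- The Pell numbers: `P 0 = 0`, `P 1 = 1`, `P (n+2) = 2 * P (n+1) + P n`. -/
def pell : ℕ → ℕ
  | 0 => 0
  | 1 => 1
  | n + 2 => 2 * pell (n + 1) + pell n

/-- The sequence of maximal exponents `e m = 2 + (P m - 2)/(P m + P (m-1))`. -/
noncomputable def e (m : ℕ) : ℝ :=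
  2 + ((pell m : ℝ) - 2) / ((pell m : ℝ) + (pell (m - 1) : ℝ))

lemma pell_pos : ∀ m, 0 < pell (m + 1)
  | 0 => by simp [pell]
  | (m+1) => by
      have := pell_pos m
      simp only [pell]
      omega

lemma pell_ge : ∀ n, n + 1 ≤ pell (n + 1)
  | 0 => by simp [pell]
  | (n+1) => by
      have := pell_ge n
      simp only [pell]
      omega

lemma pell_identity : ∀ n, (pell (n+1) : ℝ) - (1 + Real.sqrt 2) * pell n = (1 - Real.sqrt 2)^n
  | 0 => by simp [pell]
  | (n+1) => by
      have ih := pell_identity n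
      have hs : Real.sqrt 2 * Real.sqrt 2 = 2 := Real.mul_self_sqrt (by norm_num)
      simp only [pell]
      push_cast
      linear_combination (1 - Real.sqrt 2) * ih - (pell n : ℝ) * hs

lemma pell_cassini : ∀ n, (pell (n+2) : ℝ) * pell n - (pell (n+1) : ℝ)^2 = (-1)^(n+1)
  | 0 => by norm_num [pell]
  | (n+1) => by
      have ih := pell_cassini n
      have h2 : (pell (n+2) : ℝ) = 2 * pell (n+1) + pell n := by
        push_cast [pell]; ring
      have h3 : (pell (n+1+2) : ℝ) = 2 * pell (n+2) + pell (n+1) := by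
        push_cast [pell]; ring
      rw [h3, h2]
      rw [h2] at ih
      linear_combination -ih

lemma sqrt2_facts : Real.sqrt 2 * Real.sqrt 2 = 2 ∧ 1 ≤ Real.sqrt 2 ∧ Real.sqrt 2 ≤ 2 := by
  have hs : Real.sqrt 2 * Real.sqrt 2 = 2 := Real.mul_self_sqrt (by norm_num)
  have h0 : 0 ≤ Real.sqrt 2 := Real.sqrt_nonneg 2
  refine ⟨hs, by nlinarith, by nlinarith⟩

lemma eps_bounds (n : ℕ) : -1 ≤ (1 - Real.sqrt 2)^n ∧ (1 - Real.sqrt 2)^n ≤ 1 := by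
  obtain ⟨hs, hs1, hs2⟩ := sqrt2_facts
  have h : |(1 - Real.sqrt 2)^n| ≤ 1 := by
    rw [abs_pow]
    apply pow_le_one₀ (abs_nonneg _)
    rw [abs_le]
    constructor <;> nlinarith
  exact abs_le.mp h

lemma pell_bound (n : ℕ) :
    ((pell (n+1) : ℝ) - 2) / ((pell (n+1) : ℝ) + pell n) < Real.sqrt 2 / 2 := by
  obtain ⟨hs, hs1, hs2⟩ := sqrt2_facts
  have hid := pell_identity n
  have hp : (1:ℝ) ≤ pell (n+1) := by exact_mod_cast pell_pos n
  have hq : (0:ℝ) ≤ pell n := Nat.cast_nonneg _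
  obtain ⟨hE1, hE2⟩ := eps_bounds n
  have hD : (0:ℝ) < (pell (n+1) : ℝ) + pell n := by linarith
  rw [div_lt_div_iff₀ hD (by norm_num : (0:ℝ) < 2)]
  have key : Real.sqrt 2 * ((pell (n+1) : ℝ) + pell n) - 2 * ((pell (n+1) : ℝ) - 2)
      = (Real.sqrt 2 - 2) * (1 - Real.sqrt 2)^n + 4 := by
    linear_combination (Real.sqrt 2 - 2) * hid + (pell n : ℝ) * hs
  have hprod : -1 ≤ (Real.sqrt 2 - 2) * (1 - Real.sqrt 2)^n := by
    nlinarith [mul_nonneg (by linarith : (0:ℝ) ≤ 2 - Real.sqrt 2)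
      (by linarith : (0:ℝ) ≤ 1 - (1 - Real.sqrt 2)^n)]
  linarith

lemma e_succ (m : ℕ) (hm : 1 ≤ m) : e m < e (m + 1) := by
  obtain ⟨n, rfl⟩ : ∃ n, m = n + 1 := ⟨m - 1, by omega⟩
  have h1 : n + 1 - 1 = n := by omega
  have h2 : n + 1 + 1 - 1 = n + 1 := by omega
  simp only [e, h1, h2]
  have hc := pell_cassini n
  have h3 : n + 1 + 1 = n + 2 := by omega
  rw [h3]
  have hrec : (pell (n+2) : ℝ) = 2 * pell (n+1) + pell n := by
    push_cast [pell]; ring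
  have hp1 : (1:ℝ) ≤ pell (n+1) := by exact_mod_cast pell_pos n
  have hq : (0:ℝ) ≤ pell n := Nat.cast_nonneg _
  have hp2 : (1:ℝ) ≤ pell (n+2) := by linarith
  have hD1 : (0:ℝ) < (pell (n+1) : ℝ) + pell n := by linarith
  have hD2 : (0:ℝ) < (pell (n+2) : ℝ) + pell (n+1) := by linarith
  have hsign : (-1:ℝ) ≤ (-1:ℝ)^(n+1) := by
    rcases neg_one_pow_eq_or ℝ (n+1) with h | h <;> rw [h] <;> norm_num
  rw [hrec] at hc ⊢
  have hfrac : ((pell (n+1):ℝ) - 2) / ((pell (n+1):ℝ) + pell n)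
      < (2 * (pell (n+1):ℝ) + pell n - 2) / (2 * (pell (n+1):ℝ) + pell n + pell (n+1)) := by
    rw [div_lt_div_iff₀ hD1 (by linarith)]
    nlinarith [hc, hsign, hp1, hq]
  linarith

lemma e_chain : ∀ b a : ℕ, 5 ≤ a → a < b → e a < e b := by
  intro b
  induction b with
  | zero => intro a _ h; omega
  | succ n ih =>
    intro a ha hab
    rcases Nat.lt_succ_iff_lt_or_eq.mp hab with h | h
    · exact (ih a ha h).trans (e_succ n (by omega))
    · subst h; exact e_succ a (by omega)

lemma e_dist (n : ℕ) :
    |e (n + 1) - (2 + Real.sqrt 2 / 2)| ≤ 3 / ((n : ℝ) + 1) := by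
  obtain ⟨hs, hs1, hs2⟩ := sqrt2_facts
  have hid := pell_identity n
  have hp : ((n:ℝ) + 1) ≤ pell (n+1) := by exact_mod_cast pell_ge n
  have hq : (0:ℝ) ≤ pell n := Nat.cast_nonneg _
  obtain ⟨hE1, hE2⟩ := eps_bounds n
  have hn : (0:ℝ) < (n:ℝ) + 1 := by positivity
  have hD : (0:ℝ) < (pell (n+1) : ℝ) + pell n := by linarith
  have h1 : n + 1 - 1 = n := by omega
  have he : e (n+1) - (2 + Real.sqrt 2 / 2)
      = (((pell (n+1):ℝ) - 2) * 2 - ((pell (n+1):ℝ) + pell n) * Real.sqrt 2)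
        / (((pell (n+1):ℝ) + pell n) * 2) := by
    simp only [e, h1]
    field_simp
    ring
  rw [he]
  have hnum : ((pell (n+1):ℝ) - 2) * 2 - ((pell (n+1):ℝ) + pell n) * Real.sqrt 2
      = (2 - Real.sqrt 2) * (1 - Real.sqrt 2)^n - 4 := by
    linear_combination (2 - Real.sqrt 2) * hid - (pell n : ℝ) * hs
  rw [hnum, abs_div, abs_of_pos (by linarith : (0:ℝ) < ((pell (n+1):ℝ) + pell n) * 2)]
  have h6 : |(2 - Real.sqrt 2) * (1 - Real.sqrt 2)^n - 4| ≤ 6 := by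
    rw [abs_le]
    constructor <;>
      nlinarith [mul_nonneg (by linarith : (0:ℝ) ≤ 2 - Real.sqrt 2)
          (by linarith : (0:ℝ) ≤ 1 - (1 - Real.sqrt 2)^n),
        mul_nonneg (by linarith : (0:ℝ) ≤ 2 - Real.sqrt 2)
          (by linarith : (0:ℝ) ≤ 1 + (1 - Real.sqrt 2)^n)]
  have hstep : |(2 - Real.sqrt 2) * (1 - Real.sqrt 2)^n - 4|
        / (((pell (n+1):ℝ) + pell n) * 2) ≤ 6 / (((n:ℝ) + 1) * 2) :=
    div_le_div₀ (by norm_num) h6 (by positivity) (by linarith)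
  have : (6:ℝ) / (((n:ℝ) + 1) * 2) = 3 / ((n:ℝ) + 1) := by
    rw [div_eq_div_iff (by positivity) (by positivity)]; ring
  linarith [hstep, this.le, this.ge]

/-- For every `m ≥ 5`, `(P m - 2)/(P m + P (m-1)) < √2/2`; moreover
`e m = 2 + (P m - 2)/(P m + P (m-1))` is strictly increasing for `m ≥ 5` and converges
to `2 + √2/2`. -/
theorem pell_exponent_bound_monotone_tendsto :
    (∀ m : ℕ, 5 ≤ m →
      ((pell m : ℝ) - 2) / ((pell m : ℝ) + (pell (m - 1) : ℝ)) < Real.sqrt 2 / 2) ∧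
    StrictMonoOn e (Set.Ici 5) ∧
    Filter.Tendsto e Filter.atTop (nhds (2 + Real.sqrt 2 / 2)) := by
  refine ⟨?_, ?_, ?_⟩
  · intro m hm
    obtain ⟨n, rfl⟩ : ∃ n, m = n + 1 := ⟨m - 1, by omega⟩
    have h1 : n + 1 - 1 = n := by omega
    rw [h1]
    exact pell_bound n
  · intro a ha b hb hab
    exact e_chain b a ha hab
  · rw [← tendsto_sub_nhds_zero_iff]
    refine squeeze_zero_norm' ?_ (tendsto_const_div_atTop_nhds_zero_nat 3)
    · filter_upwards [Filter.eventually_ge_atTop 1] with m hm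
      obtain ⟨n, rfl⟩ : ∃ n, m = n + 1 := ⟨m - 1, by omega⟩
      rw [Real.norm_eq_abs]
      have := e_dist n
      push_cast
      linarith
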